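/- arXiv:1103.3210 — 4 statements merged into one kernel-verified Lean document; each statement's English description precedes it below -/
import Mathlib

section
/- Suppose the sequence C is hyperbolic on both ℤ₊ and ℤ₋ and the subspaces B⁺(C) and B⁻(C) are transverse, i.e. B⁺(C) + B⁻(C) = ℝⁿ. Let D be the adjoint sequence D_k = (C_k*)⁻¹, where C_k* is the adjoint of C_k with respect to the standard inner product. Then D is hyperbolic on both ℤ₊ and ℤ₋, and the only sequence (v_k)_{k∈ℤ} with v_{k+1} = D_k v_k for all k ∈ ℤ and sup_k |v_k| < ∞ is the zero sequence. -/
noncomputable section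

def Tpos {n : ℕ} (C : ℤ → (EuclideanSpace ℝ (Fin n) ≃L[ℝ] EuclideanSpace ℝ (Fin n))) :
    ℕ → (EuclideanSpace ℝ (Fin n) ≃L[ℝ] EuclideanSpace ℝ (Fin n))
  | 0 => ContinuousLinearEquiv.refl ℝ (EuclideanSpace ℝ (Fin n))
  | (k + 1) => (Tpos C k).trans (C (k : ℤ))

def Tneg {n : ℕ} (C : ℤ → (EuclideanSpace ℝ (Fin n) ≃L[ℝ] EuclideanSpace ℝ (Fin n))) :
    ℕ → (EuclideanSpace ℝ (Fin n) ≃L[ℝ] EuclideanSpace ℝ (Fin n))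
  | 0 => ContinuousLinearEquiv.refl ℝ (EuclideanSpace ℝ (Fin n))
  | (k + 1) => (Tneg C k).trans (C (-((k : ℤ) + 1))).symm

def Tfull {n : ℕ} (C : ℤ → (EuclideanSpace ℝ (Fin n) ≃L[ℝ] EuclideanSpace ℝ (Fin n))) (k : ℤ) :
    EuclideanSpace ℝ (Fin n) ≃L[ℝ] EuclideanSpace ℝ (Fin n) :=
  if 0 ≤ k then Tpos C k.toNat else Tneg C (-k).toNat

/-- Transition operator: `Phi C k l = C (k-1) ∘ ⋯ ∘ C l` for `l < k`, identity for `l = k`,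
and `(C k)⁻¹ ∘ ⋯ ∘ (C (l-1))⁻¹` for `l > k`. -/
def Phi {n : ℕ} (C : ℤ → (EuclideanSpace ℝ (Fin n) ≃L[ℝ] EuclideanSpace ℝ (Fin n))) (k l : ℤ) :
    EuclideanSpace ℝ (Fin n) ≃L[ℝ] EuclideanSpace ℝ (Fin n) :=
  (Tfull C l).symm.trans (Tfull C k)

/-- `C` is hyperbolic (has an exponential dichotomy) on `ℤ₊`. -/
def HypPlus {n : ℕ} (C : ℤ → (EuclideanSpace ℝ (Fin n) ≃L[ℝ] EuclideanSpace ℝ (Fin n))) : Prop :=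
  ∃ (K lam : ℝ) (S U : ℤ → Submodule ℝ (EuclideanSpace ℝ (Fin n))),
    0 < K ∧ 0 < lam ∧ lam < 1 ∧
    (∀ k : ℤ, 0 ≤ k → S k ⊓ U k = ⊥ ∧ S k ⊔ U k = ⊤) ∧
    (∀ k : ℤ, 0 ≤ k →
      (S k).map ((C k).toLinearEquiv : EuclideanSpace ℝ (Fin n) →ₗ[ℝ] EuclideanSpace ℝ (Fin n)) = S (k + 1) ∧
      (U k).map ((C k).toLinearEquiv : EuclideanSpace ℝ (Fin n) →ₗ[ℝ] EuclideanSpace ℝ (Fin n)) = U (k + 1)) ∧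
    (∀ k l : ℤ, 0 ≤ l → l ≤ k → ∀ v ∈ S l, ‖Phi C k l v‖ ≤ K * lam ^ (k - l) * ‖v‖) ∧
    (∀ k l : ℤ, 0 ≤ k → k ≤ l → ∀ v ∈ U l, ‖Phi C k l v‖ ≤ K * lam ^ (l - k) * ‖v‖)

/-- `C` is hyperbolic (has an exponential dichotomy) on `ℤ₋`. -/
def HypMinus {n : ℕ} (C : ℤ → (EuclideanSpace ℝ (Fin n) ≃L[ℝ] EuclideanSpace ℝ (Fin n))) : Prop :=
  ∃ (K lam : ℝ) (S U : ℤ → Submodule ℝ (EuclideanSpace ℝ (Fin n))),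
    0 < K ∧ 0 < lam ∧ lam < 1 ∧
    (∀ k : ℤ, k ≤ 0 → S k ⊓ U k = ⊥ ∧ S k ⊔ U k = ⊤) ∧
    (∀ k : ℤ, k + 1 ≤ 0 →
      (S k).map ((C k).toLinearEquiv : EuclideanSpace ℝ (Fin n) →ₗ[ℝ] EuclideanSpace ℝ (Fin n)) = S (k + 1) ∧
      (U k).map ((C k).toLinearEquiv : EuclideanSpace ℝ (Fin n) →ₗ[ℝ] EuclideanSpace ℝ (Fin n)) = U (k + 1)) ∧
    (∀ k l : ℤ, l ≤ k → k ≤ 0 → ∀ v ∈ S l, ‖Phi C k l v‖ ≤ K * lam ^ (k - l) * ‖v‖) ∧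
    (∀ k l : ℤ, k ≤ l → l ≤ 0 → ∀ v ∈ U l, ‖Phi C k l v‖ ≤ K * lam ^ (l - k) * ‖v‖)

def BplusSet {n : ℕ} (C : ℤ → (EuclideanSpace ℝ (Fin n) ≃L[ℝ] EuclideanSpace ℝ (Fin n))) :
    Set (EuclideanSpace ℝ (Fin n)) :=
  {v | Filter.Tendsto (fun k : ℕ => ‖Phi C (k : ℤ) 0 v‖) Filter.atTop (nhds 0)}

def BminusSet {n : ℕ} (C : ℤ → (EuclideanSpace ℝ (Fin n) ≃L[ℝ] EuclideanSpace ℝ (Fin n))) :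
    Set (EuclideanSpace ℝ (Fin n)) :=
  {v | Filter.Tendsto (fun k : ℕ => ‖Phi C (-(k : ℤ)) 0 v‖) Filter.atTop (nhds 0)}

section AdjHelpers

variable {n : ℕ} (C : ℤ → (EuclideanSpace ℝ (Fin n) ≃L[ℝ] EuclideanSpace ℝ (Fin n)))

lemma Tfull_succ_apply (k : ℤ) (x : EuclideanSpace ℝ (Fin n)) :
    Tfull C (k+1) x = C k (Tfull C k x) := by
  unfold Tfull
  rcases le_or_gt 0 k with hk | hk
  · have hp : (0:ℤ) ≤ k + 1 := by omega
    rw [if_pos hk, if_pos hp]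
    have h1 : (k+1).toNat = k.toNat + 1 := by omega
    have h2 : (k.toNat : ℤ) = k := by omega
    rw [h1]
    show (Tpos C k.toNat).trans (C (k.toNat : ℤ)) x = _
    rw [h2]
    rfl
  · have hn : ¬ ((0:ℤ) ≤ k) := by omega
    rw [if_neg hn]
    rcases eq_or_lt_of_le (by omega : k + 1 ≤ 0) with hk1 | hk1
    · have hk' : k = -1 := by omega
      subst hk'
      have hp : (0:ℤ) ≤ -1 + 1 := by omega
      rw [if_pos hp]
      have h1 : ((-1:ℤ)+1).toNat = 0 := by omega
      have h2 : (-(-1:ℤ)).toNat = 1 := by omega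
      rw [h1, h2]
      show x = C (-1) ((C (-((0:ℤ)+1))).symm (Tneg C 0 x))
      norm_num
      rfl
    · have hn2 : ¬ ((0:ℤ) ≤ k + 1) := by omega
      rw [if_neg hn2]
      have h1 : (-k).toNat = (-(k+1)).toNat + 1 := by omega
      rw [h1]
      show Tneg C ((-(k+1)).toNat) x = C k ((C (-(((-(k+1)).toNat : ℤ)+1))).symm (Tneg C (-(k+1)).toNat x))
      have h3 : -((((-(k+1)).toNat : ℤ)) + 1) = k := by omega
      rw [h3]
      simp

lemma Phi_apply (k l : ℤ) (x : EuclideanSpace ℝ (Fin n)) :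
    Phi C k l x = Tfull C k ((Tfull C l).symm x) := rfl

lemma Phi_trans (k l j : ℤ) (x : EuclideanSpace ℝ (Fin n)) :
    Phi C k l (Phi C l j x) = Phi C k j x := by
  simp [Phi_apply]

lemma Phi_refl (k : ℤ) (x : EuclideanSpace ℝ (Fin n)) : Phi C k k x = x := by
  simp [Phi_apply]

lemma Phi_succ (k l : ℤ) (x : EuclideanSpace ℝ (Fin n)) :
    Phi C (k+1) l x = C k (Phi C k l x) := by
  rw [Phi_apply, Phi_apply, Tfull_succ_apply]

lemma Phi_pred (k l : ℤ) (x : EuclideanSpace ℝ (Fin n)) :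
    Phi C k l x = (C k).symm (Phi C (k+1) l x) := by
  rw [Phi_succ]; simp

lemma Phi_norm_up (B : ℝ)
    (hB : ∀ k : ℤ, ‖(C k : EuclideanSpace ℝ (Fin n) →L[ℝ] EuclideanSpace ℝ (Fin n))‖ ≤ B) :
    ∀ (m : ℕ) (k : ℤ) (x : EuclideanSpace ℝ (Fin n)), ‖Phi C (k + m) k x‖ ≤ B ^ m * ‖x‖ := by
  have hB0 : 0 ≤ B := le_trans (norm_nonneg _) (hB 0)
  intro m
  induction m with
  | zero => intro k x; simp [Phi_refl]
  | succ m ih =>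
    intro k x
    have h1 : (k + ((m:ℕ)+1:ℕ) : ℤ) = (k + m) + 1 := by push_cast; ring
    rw [h1, Phi_succ]
    calc ‖C (k+m) (Phi C (k+m) k x)‖
        ≤ B * ‖Phi C (k+m) k x‖ := by
          have h := (C (k+(m:ℤ)) : EuclideanSpace ℝ (Fin n) →L[ℝ] EuclideanSpace ℝ (Fin n)).le_opNorm (Phi C (k+m) k x)
          simp only [ContinuousLinearEquiv.coe_coe] at h
          exact h.trans (mul_le_mul_of_nonneg_right (hB _) (norm_nonneg _))
      _ ≤ B * (B ^ m * ‖x‖) := mul_le_mul_of_nonneg_left (ih k x) hB0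
      _ = B ^ (m+1) * ‖x‖ := by ring

lemma Phi_norm_down (B : ℝ)
    (hB : ∀ k : ℤ, ‖((C k).symm : EuclideanSpace ℝ (Fin n) →L[ℝ] EuclideanSpace ℝ (Fin n))‖ ≤ B) :
    ∀ (m : ℕ) (k : ℤ) (x : EuclideanSpace ℝ (Fin n)), ‖Phi C (k - m) k x‖ ≤ B ^ m * ‖x‖ := by
  have hB0 : 0 ≤ B := le_trans (norm_nonneg _) (hB 0)
  intro m
  induction m with
  | zero => intro k x; simp [Phi_refl]
  | succ m ih =>
    intro k x
    have h1 : (k - ((m:ℕ)+1:ℕ) : ℤ) = (k - m) - 1 := by push_cast; ring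
    rw [h1, Phi_pred]
    have h2 : (k - (m:ℤ) - 1) + 1 = k - m := by ring
    rw [h2]
    calc ‖(C (k - (m:ℤ) - 1)).symm (Phi C (k-m) k x)‖
        ≤ B * ‖Phi C (k-m) k x‖ := by
          have h := ((C (k-(m:ℤ)-1)).symm : EuclideanSpace ℝ (Fin n) →L[ℝ] EuclideanSpace ℝ (Fin n)).le_opNorm (Phi C (k-m) k x)
          simp only [ContinuousLinearEquiv.coe_coe] at h
          exact h.trans (mul_le_mul_of_nonneg_right (hB _) (norm_nonneg _))
      _ ≤ B * (B ^ m * ‖x‖) := mul_le_mul_of_nonneg_left (ih k x) hB0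
      _ = B ^ (m+1) * ‖x‖ := by ring

lemma Phi_mem (W : ℤ → Submodule ℝ (EuclideanSpace ℝ (Fin n))) (I : Set ℤ)
    (hconv : ∀ ⦃a b j : ℤ⦄, a ∈ I → b ∈ I → a ≤ j → j ≤ b → j ∈ I)
    (hup : ∀ j : ℤ, j ∈ I → (j+1) ∈ I → ∀ x ∈ W j, C j x ∈ W (j+1))
    (hdown : ∀ j : ℤ, j ∈ I → (j+1) ∈ I → ∀ x ∈ W (j+1), (C j).symm x ∈ W j) :
    ∀ k l : ℤ, k ∈ I → l ∈ I → ∀ x ∈ W l, Phi C k l x ∈ W k := by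
  have up : ∀ (m : ℕ) (l : ℤ), l ∈ I → (l + m) ∈ I → ∀ x ∈ W l, Phi C (l+m) l x ∈ W (l+m) := by
    intro m
    induction m with
    | zero => intro l h1 _ x hx; simpa [Phi_refl] using hx
    | succ m ih =>
      intro l h1 h2 x hx
      have e : (l + ((m:ℕ)+1:ℕ) : ℤ) = (l + m) + 1 := by push_cast; ring
      rw [e] at h2 ⊢
      have hm : (l + (m:ℤ)) ∈ I := hconv h1 h2 (by omega) (by omega)
      rw [Phi_succ]
      exact hup _ hm h2 _ (ih l h1 hm x hx)
  have down : ∀ (m : ℕ) (l : ℤ), l ∈ I → (l - m) ∈ I → ∀ x ∈ W l, Phi C (l-m) l x ∈ W (l-m) := by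
    intro m
    induction m with
    | zero => intro l h1 _ x hx; simpa [Phi_refl] using hx
    | succ m ih =>
      intro l h1 h2 x hx
      have e : (l - ((m:ℕ)+1:ℕ) : ℤ) = (l - m) - 1 := by push_cast; ring
      rw [e] at h2 ⊢
      have hm : (l - (m:ℤ)) ∈ I := hconv h2 h1 (by omega) (by omega)
      rw [Phi_pred]
      have e2 : (l - (m:ℤ) - 1) + 1 = l - m := by ring
      rw [e2]
      refine hdown _ h2 (by rw [e2]; exact hm) _ ?_
      rw [e2]
      exact ih l h1 hm x hx
  intro k l hk hl x hx
  rcases le_total l k with h | h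
  · have e : k = l + ((k - l).toNat : ℤ) := by omega
    rw [e] at hk ⊢
    exact up _ l hl hk x hx
  · have e : k = l - ((l - k).toNat : ℤ) := by omega
    rw [e] at hk ⊢
    exact down _ l hl hk x hx

open RealInnerProductSpace

variable (D : ℤ → (EuclideanSpace ℝ (Fin n) ≃L[ℝ] EuclideanSpace ℝ (Fin n)))

lemma D_inner_left
    (hD : ∀ k : ℤ, (D k : EuclideanSpace ℝ (Fin n) →L[ℝ] EuclideanSpace ℝ (Fin n)) =
      ContinuousLinearMap.adjoint
        ((C k).symm : EuclideanSpace ℝ (Fin n) →L[ℝ] EuclideanSpace ℝ (Fin n)))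
    (k : ℤ) (a b : EuclideanSpace ℝ (Fin n)) : ⟪D k a, b⟫ = ⟪a, (C k).symm b⟫ := by
  have h1 : D k a = ContinuousLinearMap.adjoint
      ((C k).symm : EuclideanSpace ℝ (Fin n) →L[ℝ] EuclideanSpace ℝ (Fin n)) a := by
    rw [← hD]; rfl
  rw [h1, ContinuousLinearMap.adjoint_inner_left]
  rfl

lemma Dsymm_inner
    (hD : ∀ k : ℤ, (D k : EuclideanSpace ℝ (Fin n) →L[ℝ] EuclideanSpace ℝ (Fin n)) =
      ContinuousLinearMap.adjoint
        ((C k).symm : EuclideanSpace ℝ (Fin n) →L[ℝ] EuclideanSpace ℝ (Fin n)))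
    (k : ℤ) (a b : EuclideanSpace ℝ (Fin n)) : ⟪(D k).symm a, b⟫ = ⟪a, C k b⟫ := by
  have h := D_inner_left C D hD k ((D k).symm a) (C k b)
  simpa using h.symm

lemma Tfull_pair
    (hD : ∀ k : ℤ, (D k : EuclideanSpace ℝ (Fin n) →L[ℝ] EuclideanSpace ℝ (Fin n)) =
      ContinuousLinearMap.adjoint
        ((C k).symm : EuclideanSpace ℝ (Fin n) →L[ℝ] EuclideanSpace ℝ (Fin n)))
    (k : ℤ) (v w : EuclideanSpace ℝ (Fin n)) : ⟪Tfull D k v, Tfull C k w⟫ = ⟪v, w⟫ := by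
  induction k using Int.induction_on with
  | zero => simp [Tfull, Tpos]
  | succ i ih =>
    rw [Tfull_succ_apply, Tfull_succ_apply, D_inner_left C D hD,
      ContinuousLinearEquiv.symm_apply_apply]
    exact ih
  | pred i ih =>
    have eC : Tfull C (-(i:ℤ) - 1) w = (C (-(i:ℤ)-1)).symm (Tfull C (-(i:ℤ)) w) := by
      have h := Tfull_succ_apply C (-(i:ℤ)-1) w
      rw [show (-(i:ℤ)-1)+1 = -(i:ℤ) by ring] at h
      rw [h]; simp
    have eD : Tfull D (-(i:ℤ) - 1) v = (D (-(i:ℤ)-1)).symm (Tfull D (-(i:ℤ)) v) := by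
      have h := Tfull_succ_apply D (-(i:ℤ)-1) v
      rw [show (-(i:ℤ)-1)+1 = -(i:ℤ) by ring] at h
      rw [h]; simp
    rw [eC, eD, Dsymm_inner C D hD, ContinuousLinearEquiv.apply_symm_apply]
    exact ih

lemma Phi_pair
    (hD : ∀ k : ℤ, (D k : EuclideanSpace ℝ (Fin n) →L[ℝ] EuclideanSpace ℝ (Fin n)) =
      ContinuousLinearMap.adjoint
        ((C k).symm : EuclideanSpace ℝ (Fin n) →L[ℝ] EuclideanSpace ℝ (Fin n)))
    (k l : ℤ) (v w : EuclideanSpace ℝ (Fin n)) : ⟪Phi D k l v, Phi C k l w⟫ = ⟪v, w⟫ := by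
  rw [Phi_apply, Phi_apply, Tfull_pair C D hD]
  have h2 := Tfull_pair C D hD l ((Tfull D l).symm v) ((Tfull C l).symm w)
  simp only [ContinuousLinearEquiv.apply_symm_apply] at h2
  exact h2.symm

lemma Phi_pair'
    (hD : ∀ k : ℤ, (D k : EuclideanSpace ℝ (Fin n) →L[ℝ] EuclideanSpace ℝ (Fin n)) =
      ContinuousLinearMap.adjoint
        ((C k).symm : EuclideanSpace ℝ (Fin n) →L[ℝ] EuclideanSpace ℝ (Fin n)))
    (k l : ℤ) (v w : EuclideanSpace ℝ (Fin n)) : ⟪Phi D k l v, w⟫ = ⟪v, Phi C l k w⟫ := by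
  have h := Phi_pair C D hD k l v (Phi C l k w)
  rwa [Phi_trans, Phi_refl] at h

lemma proj_bound_up (B : ℝ)
    (hB : ∀ k : ℤ, ‖(C k : EuclideanSpace ℝ (Fin n) →L[ℝ] EuclideanSpace ℝ (Fin n))‖ ≤ B)
    (K lam : ℝ) (S U : ℤ → Submodule ℝ (EuclideanSpace ℝ (Fin n)))
    (hK : 0 < K) (hl0 : 0 < lam) (hl1 : lam < 1)
    (hSmem : ∀ k l : ℤ, 0 ≤ k → 0 ≤ l → ∀ x ∈ S l, Phi C k l x ∈ S k)
    (hUmem : ∀ k l : ℤ, 0 ≤ k → 0 ≤ l → ∀ x ∈ U l, Phi C k l x ∈ U k)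
    (hS : ∀ k l : ℤ, 0 ≤ l → l ≤ k → ∀ v ∈ S l, ‖Phi C k l v‖ ≤ K * lam ^ (k - l) * ‖v‖)
    (hU : ∀ k l : ℤ, 0 ≤ k → k ≤ l → ∀ v ∈ U l, ‖Phi C k l v‖ ≤ K * lam ^ (l - k) * ‖v‖) :
    ∃ M : ℝ, 1 ≤ M ∧ ∀ k : ℤ, 0 ≤ k → ∀ s ∈ S k, ∀ u ∈ U k,
      ‖s‖ ≤ M * ‖s + u‖ ∧ ‖u‖ ≤ M * ‖s + u‖ := by
  obtain ⟨m, hm⟩ := exists_pow_lt_of_lt_one (by positivity : (0:ℝ) < 1/(2*K^2)) hl1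
  have hB0 : 0 ≤ B := le_trans (norm_nonneg _) (hB 0)
  have ha0 : (0:ℝ) ≤ lam ^ m := pow_nonneg hl0.le m
  have ha1 : lam ^ m ≤ 1 := pow_le_one₀ hl0.le hl1.le
  have hb0 : (0:ℝ) ≤ B ^ m := pow_nonneg hB0 m
  have h2K : (0:ℝ) < 2*K^2 := by positivity
  have hm' : lam^m * (2*K^2) < 1 := by
    rw [← lt_div_iff₀ h2K]; simpa using hm
  have hc : K^2 * (lam^m * lam^m) ≤ 1/2 := by
    nlinarith [mul_le_mul_of_nonneg_left ha1 (mul_nonneg (sq_nonneg K) ha0)]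
  refine ⟨2*K*lam^m*B^m + 2,
    by nlinarith [mul_nonneg (mul_nonneg (mul_nonneg (by norm_num : (0:ℝ) ≤ 2) hK.le) ha0) hb0], ?_⟩
  intro k hk s hs u hu
  have key : ‖u‖ ≤ (2*K*lam^m*B^m + 1) * ‖s + u‖ := by
    have h1 : ‖u‖ ≤ K * lam^m * ‖Phi C (k+m) k u‖ := by
      have hu' : Phi C (k+(m:ℤ)) k u ∈ U (k+m) := hUmem _ _ (by omega) hk u hu
      have h := hU k (k+m) hk (by omega) _ hu'
      rw [Phi_trans, Phi_refl] at h
      rwa [show (k+(m:ℤ) - k) = (m:ℤ) by ring, zpow_natCast] at h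
    have h2 : ‖Phi C (k+m) k (s+u)‖ ≤ B^m * ‖s+u‖ := Phi_norm_up C B hB m k (s+u)
    have h3 : ‖Phi C (k+m) k s‖ ≤ K * lam^m * ‖s‖ := by
      have h := hS (k+m) k hk (by omega) s hs
      rwa [show (k+(m:ℤ)-k) = (m:ℤ) by ring, zpow_natCast] at h
    have h4 : ‖Phi C (k+m) k u‖ ≤ ‖Phi C (k+m) k (s+u)‖ + ‖Phi C (k+m) k s‖ := by
      have e : Phi C (k+(m:ℤ)) k u = Phi C (k+m) k (s+u) - Phi C (k+m) k s := by
        rw [map_add]; abel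
      rw [e]; exact norm_sub_le _ _
    have h5 : ‖s‖ ≤ ‖s+u‖ + ‖u‖ := by
      have e : s = (s+u) - u := by abel
      nth_rewrite 1 [e]; exact norm_sub_le _ _
    have h6 : ‖Phi C (k+m) k u‖ ≤ B^m*‖s+u‖ + K*lam^m*‖s‖ := le_trans h4 (add_le_add h2 h3)
    have h7 : ‖u‖ ≤ K*lam^m * (B^m*‖s+u‖ + K*lam^m*‖s‖) :=
      le_trans h1 (mul_le_mul_of_nonneg_left h6 (by positivity))
    nlinarith [norm_nonneg u, norm_nonneg (s+u), norm_nonneg s,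
      mul_le_mul_of_nonneg_right hc (norm_nonneg (s+u)),
      mul_le_mul_of_nonneg_right hc (norm_nonneg u)]
  constructor
  · have h5 : ‖s‖ ≤ ‖s+u‖ + ‖u‖ := by
      have e : s = (s+u) - u := by abel
      nth_rewrite 1 [e]; exact norm_sub_le _ _
    nlinarith [norm_nonneg (s+u)]
  · nlinarith [norm_nonneg (s+u)]

lemma proj_bound_down (B : ℝ)
    (hB : ∀ k : ℤ, ‖((C k).symm : EuclideanSpace ℝ (Fin n) →L[ℝ] EuclideanSpace ℝ (Fin n))‖ ≤ B)
    (K lam : ℝ) (S U : ℤ → Submodule ℝ (EuclideanSpace ℝ (Fin n)))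
    (hK : 0 < K) (hl0 : 0 < lam) (hl1 : lam < 1)
    (hSmem : ∀ k l : ℤ, k ≤ 0 → l ≤ 0 → ∀ x ∈ S l, Phi C k l x ∈ S k)
    (hUmem : ∀ k l : ℤ, k ≤ 0 → l ≤ 0 → ∀ x ∈ U l, Phi C k l x ∈ U k)
    (hS : ∀ k l : ℤ, l ≤ k → k ≤ 0 → ∀ v ∈ S l, ‖Phi C k l v‖ ≤ K * lam ^ (k - l) * ‖v‖)
    (hU : ∀ k l : ℤ, k ≤ l → l ≤ 0 → ∀ v ∈ U l, ‖Phi C k l v‖ ≤ K * lam ^ (l - k) * ‖v‖) :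
    ∃ M : ℝ, 1 ≤ M ∧ ∀ k : ℤ, k ≤ 0 → ∀ s ∈ S k, ∀ u ∈ U k,
      ‖s‖ ≤ M * ‖s + u‖ ∧ ‖u‖ ≤ M * ‖s + u‖ := by
  obtain ⟨m, hm⟩ := exists_pow_lt_of_lt_one (by positivity : (0:ℝ) < 1/(2*K^2)) hl1
  have hB0 : 0 ≤ B := le_trans (norm_nonneg _) (hB 0)
  have ha0 : (0:ℝ) ≤ lam ^ m := pow_nonneg hl0.le m
  have ha1 : lam ^ m ≤ 1 := pow_le_one₀ hl0.le hl1.le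
  have hb0 : (0:ℝ) ≤ B ^ m := pow_nonneg hB0 m
  have h2K : (0:ℝ) < 2*K^2 := by positivity
  have hm' : lam^m * (2*K^2) < 1 := by
    rw [← lt_div_iff₀ h2K]; simpa using hm
  have hc : K^2 * (lam^m * lam^m) ≤ 1/2 := by
    nlinarith [mul_le_mul_of_nonneg_left ha1 (mul_nonneg (sq_nonneg K) ha0)]
  refine ⟨2*K*lam^m*B^m + 2,
    by nlinarith [mul_nonneg (mul_nonneg (mul_nonneg (by norm_num : (0:ℝ) ≤ 2) hK.le) ha0) hb0], ?_⟩
  intro k hk s hs u hu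
  have key : ‖s‖ ≤ (2*K*lam^m*B^m + 1) * ‖s + u‖ := by
    have h1 : ‖s‖ ≤ K * lam^m * ‖Phi C (k-m) k s‖ := by
      have hs' : Phi C (k-(m:ℤ)) k s ∈ S (k-m) := hSmem _ _ (by omega) hk s hs
      have h := hS k (k-m) (by omega) hk _ hs'
      rw [Phi_trans, Phi_refl] at h
      rwa [show (k - (k-(m:ℤ))) = (m:ℤ) by ring, zpow_natCast] at h
    have h2 : ‖Phi C (k-m) k (s+u)‖ ≤ B^m * ‖s+u‖ := Phi_norm_down C B hB m k (s+u)
    have h3 : ‖Phi C (k-m) k u‖ ≤ K * lam^m * ‖u‖ := by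
      have h := hU (k-m) k (by omega) hk u hu
      rwa [show (k-(k-(m:ℤ))) = (m:ℤ) by ring, zpow_natCast] at h
    have h4 : ‖Phi C (k-m) k s‖ ≤ ‖Phi C (k-m) k (s+u)‖ + ‖Phi C (k-m) k u‖ := by
      have e : Phi C (k-(m:ℤ)) k s = Phi C (k-m) k (s+u) - Phi C (k-m) k u := by
        rw [map_add]; abel
      rw [e]; exact norm_sub_le _ _
    have h5 : ‖u‖ ≤ ‖s+u‖ + ‖s‖ := by
      have e : u = (s+u) - s := by abel
      nth_rewrite 1 [e]; exact norm_sub_le _ _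
    have h6 : ‖Phi C (k-m) k s‖ ≤ B^m*‖s+u‖ + K*lam^m*‖u‖ := le_trans h4 (add_le_add h2 h3)
    have h7 : ‖s‖ ≤ K*lam^m * (B^m*‖s+u‖ + K*lam^m*‖u‖) :=
      le_trans h1 (mul_le_mul_of_nonneg_left h6 (by positivity))
    nlinarith [norm_nonneg u, norm_nonneg (s+u), norm_nonneg s,
      mul_le_mul_of_nonneg_right hc (norm_nonneg (s+u)),
      mul_le_mul_of_nonneg_right hc (norm_nonneg s)]
  constructor
  · nlinarith [norm_nonneg (s+u)]
  · have h5 : ‖u‖ ≤ ‖s+u‖ + ‖s‖ := by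
      have e : u = (s+u) - s := by abel
      nth_rewrite 1 [e]; exact norm_sub_le _ _
    nlinarith [norm_nonneg (s+u)]

lemma orth_compl {S U : Submodule ℝ (EuclideanSpace ℝ (Fin n))}
    (h1 : S ⊓ U = ⊥) (h2 : S ⊔ U = ⊤) : Sᗮ ⊓ Uᗮ = ⊥ ∧ Sᗮ ⊔ Uᗮ = ⊤ := by
  constructor
  · rw [Submodule.inf_orthogonal, h2, Submodule.top_orthogonal_eq_bot]
  · have h3 : (Sᗮ ⊔ Uᗮ)ᗮ = ⊥ := by
      rw [← Submodule.inf_orthogonal, Submodule.orthogonal_orthogonal,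
        Submodule.orthogonal_orthogonal, h1]
    have h4 := congrArg Submodule.orthogonal h3
    rwa [Submodule.orthogonal_orthogonal, Submodule.bot_orthogonal_eq_top] at h4

lemma adj_map
    (hD : ∀ k : ℤ, (D k : EuclideanSpace ℝ (Fin n) →L[ℝ] EuclideanSpace ℝ (Fin n)) =
      ContinuousLinearMap.adjoint
        ((C k).symm : EuclideanSpace ℝ (Fin n) →L[ℝ] EuclideanSpace ℝ (Fin n)))
    (k : ℤ) {W W' : Submodule ℝ (EuclideanSpace ℝ (Fin n))}
    (hmap : W.map ((C k).toLinearEquiv : EuclideanSpace ℝ (Fin n) →ₗ[ℝ] EuclideanSpace ℝ (Fin n)) = W') :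
    Wᗮ.map ((D k).toLinearEquiv : EuclideanSpace ℝ (Fin n) →ₗ[ℝ] EuclideanSpace ℝ (Fin n)) = W'ᗮ := by
  have hCf : ∀ x ∈ W, C k x ∈ W' := by
    intro x hx; rw [← hmap]; exact ⟨x, hx, rfl⟩
  have hCb : ∀ y ∈ W', (C k).symm y ∈ W := by
    intro y hy; rw [← hmap] at hy
    obtain ⟨x, hx, hxy⟩ := hy
    have hxy' : C k x = y := hxy
    rw [← hxy', ContinuousLinearEquiv.symm_apply_apply]; exact hx
  apply le_antisymm
  · rintro _ ⟨x, hx, rfl⟩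
    rw [Submodule.mem_orthogonal]
    intro y hy
    show ⟪y, D k x⟫ = 0
    rw [real_inner_comm, D_inner_left C D hD]
    rw [real_inner_comm]
    exact (Submodule.mem_orthogonal W x).1 hx _ (hCb y hy)
  · intro y hy
    refine ⟨(D k).symm y, ?_, ?_⟩
    · show (D k).symm y ∈ Wᗮ
      rw [Submodule.mem_orthogonal]
      intro t ht
      show ⟪t, (D k).symm y⟫ = 0
      rw [real_inner_comm, Dsymm_inner C D hD]
      rw [real_inner_comm]
      exact (Submodule.mem_orthogonal W' y).1 hy _ (hCf t ht)
    · exact (D k).apply_symm_apply y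

lemma adj_estimates
    (hD : ∀ k : ℤ, (D k : EuclideanSpace ℝ (Fin n) →L[ℝ] EuclideanSpace ℝ (Fin n)) =
      ContinuousLinearMap.adjoint
        ((C k).symm : EuclideanSpace ℝ (Fin n) →L[ℝ] EuclideanSpace ℝ (Fin n)))
    (I : Set ℤ) (K lam M : ℝ) (S U : ℤ → Submodule ℝ (EuclideanSpace ℝ (Fin n)))
    (hK : 0 < K) (hl0 : 0 < lam) (hM : 0 ≤ M)
    (hsup : ∀ k ∈ I, S k ⊔ U k = ⊤)
    (hSmem : ∀ k l : ℤ, k ∈ I → l ∈ I → ∀ x ∈ S l, Phi C k l x ∈ S k)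
    (hUmem : ∀ k l : ℤ, k ∈ I → l ∈ I → ∀ x ∈ U l, Phi C k l x ∈ U k)
    (hS : ∀ k l : ℤ, k ∈ I → l ∈ I → l ≤ k → ∀ v ∈ S l, ‖Phi C k l v‖ ≤ K * lam ^ (k - l) * ‖v‖)
    (hU : ∀ k l : ℤ, k ∈ I → l ∈ I → k ≤ l → ∀ v ∈ U l, ‖Phi C k l v‖ ≤ K * lam ^ (l - k) * ‖v‖)
    (hMb : ∀ k ∈ I, ∀ s ∈ S k, ∀ u ∈ U k, ‖s‖ ≤ M * ‖s + u‖ ∧ ‖u‖ ≤ M * ‖s + u‖) :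
    (∀ k l : ℤ, k ∈ I → l ∈ I → l ≤ k → ∀ v ∈ (S l)ᗮ,
      ‖Phi D k l v‖ ≤ (K * M) * lam ^ (k - l) * ‖v‖) ∧
    (∀ k l : ℤ, k ∈ I → l ∈ I → k ≤ l → ∀ v ∈ (U l)ᗮ,
      ‖Phi D k l v‖ ≤ (K * M) * lam ^ (l - k) * ‖v‖) := by
  constructor
  · intro k l hk hl hlk v hv
    set z := Phi D k l v with hz
    set x := Phi C l k z with hx
    have hxz : Phi C k l x = z := by rw [hx, Phi_trans, Phi_refl]
    have hxtop : x ∈ S l ⊔ U l := by rw [hsup l hl]; exact Submodule.mem_top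
    obtain ⟨s, hs, u, hu, hsu⟩ := Submodule.mem_sup.1 hxtop
    have hvs : ⟪v, s⟫ = 0 := by
      rw [real_inner_comm]; exact (Submodule.mem_orthogonal (S l) v).1 hv s hs
    have hz2 : ‖z‖ * ‖z‖ = ⟪v, u⟫ := by
      rw [← real_inner_self_eq_norm_mul_norm]
      calc ⟪z, z⟫ = ⟪Phi D k l v, Phi C k l x⟫ := by rw [hxz]
        _ = ⟪v, x⟫ := Phi_pair C D hD k l v x
        _ = ⟪v, s⟫ + ⟪v, u⟫ := by rw [← hsu, inner_add_right]
        _ = ⟪v, u⟫ := by rw [hvs, zero_add]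
    have hs' : Phi C k l s ∈ S k := hSmem k l hk hl s hs
    have hu' : Phi C k l u ∈ U k := hUmem k l hk hl u hu
    have hzdec : Phi C k l s + Phi C k l u = z := by
      rw [← map_add, hsu, hxz]
    have hub : ‖u‖ ≤ K * lam ^ (k - l) * ‖Phi C k l u‖ := by
      have h := hU l k hl hk hlk _ hu'
      rwa [Phi_trans, Phi_refl] at h
    have hMub : ‖Phi C k l u‖ ≤ M * ‖z‖ := by
      have h := (hMb k hk _ hs' _ hu').2
      rwa [hzdec] at h
    have hfin : ‖z‖ * ‖z‖ ≤ (K * M) * lam ^ (k - l) * ‖v‖ * ‖z‖ := by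
      rw [hz2]
      calc ⟪v, u⟫ ≤ ‖v‖ * ‖u‖ := real_inner_le_norm v u
        _ ≤ ‖v‖ * (K * lam ^ (k-l) * (M * ‖z‖)) := by
            apply mul_le_mul_of_nonneg_left _ (norm_nonneg v)
            exact hub.trans (mul_le_mul_of_nonneg_left hMub (by positivity))
        _ = (K * M) * lam ^ (k - l) * ‖v‖ * ‖z‖ := by ring
    rcases eq_or_lt_of_le (norm_nonneg z) with h0 | h0
    · rw [← h0]
      exact mul_nonneg (mul_nonneg (mul_nonneg hK.le hM) (zpow_nonneg hl0.le _)) (norm_nonneg _)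
    · exact le_of_mul_le_mul_right hfin h0
  · intro k l hk hl hkl v hv
    set z := Phi D k l v with hz
    set x := Phi C l k z with hx
    have hxz : Phi C k l x = z := by rw [hx, Phi_trans, Phi_refl]
    have hxtop : x ∈ S l ⊔ U l := by rw [hsup l hl]; exact Submodule.mem_top
    obtain ⟨s, hs, u, hu, hsu⟩ := Submodule.mem_sup.1 hxtop
    have hvu : ⟪v, u⟫ = 0 := by
      rw [real_inner_comm]; exact (Submodule.mem_orthogonal (U l) v).1 hv u hu
    have hz2 : ‖z‖ * ‖z‖ = ⟪v, s⟫ := by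
      rw [← real_inner_self_eq_norm_mul_norm]
      calc ⟪z, z⟫ = ⟪Phi D k l v, Phi C k l x⟫ := by rw [hxz]
        _ = ⟪v, x⟫ := Phi_pair C D hD k l v x
        _ = ⟪v, s⟫ + ⟪v, u⟫ := by rw [← hsu, inner_add_right]
        _ = ⟪v, s⟫ := by rw [hvu, add_zero]
    have hs' : Phi C k l s ∈ S k := hSmem k l hk hl s hs
    have hu' : Phi C k l u ∈ U k := hUmem k l hk hl u hu
    have hzdec : Phi C k l s + Phi C k l u = z := by
      rw [← map_add, hsu, hxz]
    have hsb : ‖s‖ ≤ K * lam ^ (l - k) * ‖Phi C k l s‖ := by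
      have h := hS l k hl hk hkl _ hs'
      rwa [Phi_trans, Phi_refl] at h
    have hMsb : ‖Phi C k l s‖ ≤ M * ‖z‖ := by
      have h := (hMb k hk _ hs' _ hu').1
      rwa [hzdec] at h
    have hfin : ‖z‖ * ‖z‖ ≤ (K * M) * lam ^ (l - k) * ‖v‖ * ‖z‖ := by
      rw [hz2]
      calc ⟪v, s⟫ ≤ ‖v‖ * ‖s‖ := real_inner_le_norm v s
        _ ≤ ‖v‖ * (K * lam ^ (l-k) * (M * ‖z‖)) := by
            apply mul_le_mul_of_nonneg_left _ (norm_nonneg v)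
            exact hsb.trans (mul_le_mul_of_nonneg_left hMsb (by positivity))
        _ = (K * M) * lam ^ (l - k) * ‖v‖ * ‖z‖ := by ring
    rcases eq_or_lt_of_le (norm_nonneg z) with h0 | h0
    · rw [← h0]
      exact mul_nonneg (mul_nonneg (mul_nonneg hK.le hM) (zpow_nonneg hl0.le _)) (norm_nonneg _)
    · exact le_of_mul_le_mul_right hfin h0

theorem main_thm
    (hC : ∃ B : ℝ, ∀ k : ℤ,
      ‖(C k : EuclideanSpace ℝ (Fin n) →L[ℝ] EuclideanSpace ℝ (Fin n))‖ ≤ B ∧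
      ‖((C k).symm : EuclideanSpace ℝ (Fin n) →L[ℝ] EuclideanSpace ℝ (Fin n))‖ ≤ B)
    (hD : ∀ k : ℤ, (D k : EuclideanSpace ℝ (Fin n) →L[ℝ] EuclideanSpace ℝ (Fin n)) =
      ContinuousLinearMap.adjoint
        ((C k).symm : EuclideanSpace ℝ (Fin n) →L[ℝ] EuclideanSpace ℝ (Fin n)))
    (hplus : HypPlus C) (hminus : HypMinus C)
    (htrans : ∀ w : EuclideanSpace ℝ (Fin n),
      ∃ u ∈ BplusSet C, ∃ z ∈ BminusSet C, w = u + z) :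
    HypPlus D ∧ HypMinus D ∧
      ∀ v : ℤ → EuclideanSpace ℝ (Fin n),
        (∀ k : ℤ, v (k + 1) = D k (v k)) → (∃ B : ℝ, ∀ k : ℤ, ‖v k‖ ≤ B) →
        ∀ k : ℤ, v k = 0 := by
  obtain ⟨B, hB⟩ := hC
  refine ⟨?_, ?_, ?_⟩
  · -- HypPlus D
    obtain ⟨K, lam, S, U, hK, hl0, hl1, hcompl, hinv, hS, hU⟩ := hplus
    set I : Set ℤ := {j : ℤ | 0 ≤ j} with hIdef
    have hconv : ∀ ⦃a b j : ℤ⦄, a ∈ I → b ∈ I → a ≤ j → j ≤ b → j ∈ I := by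
      intro a b j ha hb h1 h2
      simp only [hIdef, Set.mem_setOf_eq] at *
      omega
    have hSmem : ∀ k l : ℤ, k ∈ I → l ∈ I → ∀ x ∈ S l, Phi C k l x ∈ S k := by
      refine Phi_mem C S I hconv ?_ ?_
      · intro j hj _ x hx
        rw [← (hinv j hj).1]; exact ⟨x, hx, rfl⟩
      · intro j hj _ x hx
        rw [← (hinv j hj).1] at hx
        obtain ⟨y, hy, hxy⟩ := hx
        have h : C j y = x := hxy
        rw [← h, ContinuousLinearEquiv.symm_apply_apply]; exact hy
    have hUmem : ∀ k l : ℤ, k ∈ I → l ∈ I → ∀ x ∈ U l, Phi C k l x ∈ U k := by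
      refine Phi_mem C U I hconv ?_ ?_
      · intro j hj _ x hx
        rw [← (hinv j hj).2]; exact ⟨x, hx, rfl⟩
      · intro j hj _ x hx
        rw [← (hinv j hj).2] at hx
        obtain ⟨y, hy, hxy⟩ := hx
        have h : C j y = x := hxy
        rw [← h, ContinuousLinearEquiv.symm_apply_apply]; exact hy
    obtain ⟨M, hM1, hMb⟩ := proj_bound_up C B (fun k => (hB k).1) K lam S U hK hl0 hl1
      (fun k l hk hl => hSmem k l hk hl) (fun k l hk hl => hUmem k l hk hl)
      hS hU
    obtain ⟨estS, estU⟩ := adj_estimates C D hD I K lam M S U hK hl0 (by linarith)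
      (fun k hk => (hcompl k hk).2) hSmem hUmem
      (fun k l hk hl hlk => hS k l hl hlk) (fun k l hk hl hkl => hU k l hk hkl)
      (fun k hk => hMb k hk)
    refine ⟨K * M, lam, fun k => (S k)ᗮ, fun k => (U k)ᗮ,
      mul_pos hK (lt_of_lt_of_le one_pos hM1), hl0, hl1, ?_, ?_, ?_, ?_⟩
    · intro k hk; exact orth_compl (hcompl k hk).1 (hcompl k hk).2
    · intro k hk
      exact ⟨adj_map C D hD k (hinv k hk).1, adj_map C D hD k (hinv k hk).2⟩
    · intro k l hl hlk v hv
      exact estS k l (le_trans hl hlk) hl hlk v hv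
    · intro k l hk hkl v hv
      exact estU k l hk (le_trans hk hkl) hkl v hv
  · -- HypMinus D
    obtain ⟨K, lam, S, U, hK, hl0, hl1, hcompl, hinv, hS, hU⟩ := hminus
    set I : Set ℤ := {j : ℤ | j ≤ 0} with hIdef
    have hconv : ∀ ⦃a b j : ℤ⦄, a ∈ I → b ∈ I → a ≤ j → j ≤ b → j ∈ I := by
      intro a b j ha hb h1 h2
      simp only [hIdef, Set.mem_setOf_eq] at *
      omega
    have hSmem : ∀ k l : ℤ, k ∈ I → l ∈ I → ∀ x ∈ S l, Phi C k l x ∈ S k := by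
      refine Phi_mem C S I hconv ?_ ?_
      · intro j _ hj1 x hx
        rw [← (hinv j hj1).1]; exact ⟨x, hx, rfl⟩
      · intro j _ hj1 x hx
        rw [← (hinv j hj1).1] at hx
        obtain ⟨y, hy, hxy⟩ := hx
        have h : C j y = x := hxy
        rw [← h, ContinuousLinearEquiv.symm_apply_apply]; exact hy
    have hUmem : ∀ k l : ℤ, k ∈ I → l ∈ I → ∀ x ∈ U l, Phi C k l x ∈ U k := by
      refine Phi_mem C U I hconv ?_ ?_
      · intro j _ hj1 x hx
        rw [← (hinv j hj1).2]; exact ⟨x, hx, rfl⟩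
      · intro j _ hj1 x hx
        rw [← (hinv j hj1).2] at hx
        obtain ⟨y, hy, hxy⟩ := hx
        have h : C j y = x := hxy
        rw [← h, ContinuousLinearEquiv.symm_apply_apply]; exact hy
    obtain ⟨M, hM1, hMb⟩ := proj_bound_down C B (fun k => (hB k).2) K lam S U hK hl0 hl1
      (fun k l hk hl => hSmem k l hk hl) (fun k l hk hl => hUmem k l hk hl)
      (fun k l hlk hk => hS k l hlk hk) (fun k l hkl hl => hU k l hkl hl)
    obtain ⟨estS, estU⟩ := adj_estimates C D hD I K lam M S U hK hl0 (by linarith)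
      (fun k hk => (hcompl k hk).2) hSmem hUmem
      (fun k l hk hl hlk => hS k l hlk hk) (fun k l hk hl hkl => hU k l hkl hl)
      (fun k hk => hMb k hk)
    refine ⟨K * M, lam, fun k => (S k)ᗮ, fun k => (U k)ᗮ,
      mul_pos hK (lt_of_lt_of_le one_pos hM1), hl0, hl1, ?_, ?_, ?_, ?_⟩
    · intro k hk; exact orth_compl (hcompl k hk).1 (hcompl k hk).2
    · intro k hk
      exact ⟨adj_map C D hD k (hinv k hk).1, adj_map C D hD k (hinv k hk).2⟩
    · intro k l hlk hk v hv
      exact estS k l hk (le_trans hlk hk) hlk v hv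
    · intro k l hkl hl v hv
      exact estU k l (le_trans hkl hl) hl hkl v hv
  · -- no nonzero bounded solution
    intro v hrec hbound
    obtain ⟨B', hB'⟩ := hbound
    have hB'0 : 0 ≤ B' := le_trans (norm_nonneg _) (hB' 0)
    have hv0 : ∀ k : ℤ, v k = Phi D k 0 (v 0) := by
      intro k
      induction k using Int.induction_on with
      | zero => rw [Phi_refl]
      | succ i ih =>
        rw [hrec i, ih, ← Phi_succ]
      | pred i ih =>
        have h := hrec (-(i:ℤ)-1)
        rw [show (-(i:ℤ)-1)+1 = -(i:ℤ) by ring] at h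
        have h2 : v (-(i:ℤ)-1) = (D (-(i:ℤ)-1)).symm (v (-(i:ℤ))) := by
          rw [h, ContinuousLinearEquiv.symm_apply_apply]
        rw [h2, ih]
        have h3 := Phi_pred D (-(i:ℤ)-1) 0 (v 0)
        rw [show (-(i:ℤ)-1)+1 = -(i:ℤ) by ring] at h3
        rw [h3]
    have horth : ∀ w : EuclideanSpace ℝ (Fin n), ⟪v 0, w⟫ = 0 := by
      have hBp : ∀ w ∈ BplusSet C, ⟪v 0, w⟫ = 0 := by
        intro w hw
        have hb : ∀ m : ℕ, |⟪v 0, w⟫| ≤ B' * ‖Phi C (m:ℤ) 0 w‖ := by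
          intro m
          have hp : ⟪v 0, w⟫ = ⟪Phi D (m:ℤ) 0 (v 0), Phi C (m:ℤ) 0 w⟫ :=
            (Phi_pair C D hD (m:ℤ) 0 _ _).symm
          rw [hp]
          calc |⟪Phi D (m:ℤ) 0 (v 0), Phi C (m:ℤ) 0 w⟫|
              ≤ ‖Phi D (m:ℤ) 0 (v 0)‖ * ‖Phi C (m:ℤ) 0 w‖ := abs_real_inner_le_norm _ _
            _ ≤ B' * ‖Phi C (m:ℤ) 0 w‖ := by
                apply mul_le_mul_of_nonneg_right _ (norm_nonneg _)
                rw [← hv0 (m:ℤ)]; exact hB' (m:ℤ)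
        have hlim : Filter.Tendsto (fun m : ℕ => B' * ‖Phi C (m:ℤ) 0 w‖)
            Filter.atTop (nhds 0) := by
          have := hw.const_mul B'
          simpa using this
        have habs : |⟪v 0, w⟫| ≤ 0 := ge_of_tendsto' hlim hb
        have := abs_nonneg (⟪v 0, w⟫)
        exact abs_eq_zero.1 (le_antisymm habs this)
      have hBm : ∀ w ∈ BminusSet C, ⟪v 0, w⟫ = 0 := by
        intro w hw
        have hb : ∀ m : ℕ, |⟪v 0, w⟫| ≤ B' * ‖Phi C (-(m:ℤ)) 0 w‖ := by
          intro m
          have hp : ⟪v 0, w⟫ = ⟪Phi D (-(m:ℤ)) 0 (v 0), Phi C (-(m:ℤ)) 0 w⟫ :=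
            (Phi_pair C D hD (-(m:ℤ)) 0 _ _).symm
          rw [hp]
          calc |⟪Phi D (-(m:ℤ)) 0 (v 0), Phi C (-(m:ℤ)) 0 w⟫|
              ≤ ‖Phi D (-(m:ℤ)) 0 (v 0)‖ * ‖Phi C (-(m:ℤ)) 0 w‖ := abs_real_inner_le_norm _ _
            _ ≤ B' * ‖Phi C (-(m:ℤ)) 0 w‖ := by
                apply mul_le_mul_of_nonneg_right _ (norm_nonneg _)
                rw [← hv0 (-(m:ℤ))]; exact hB' (-(m:ℤ))
        have hlim : Filter.Tendsto (fun m : ℕ => B' * ‖Phi C (-(m:ℤ)) 0 w‖)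
            Filter.atTop (nhds 0) := by
          have := hw.const_mul B'
          simpa using this
        have habs : |⟪v 0, w⟫| ≤ 0 := ge_of_tendsto' hlim hb
        have := abs_nonneg (⟪v 0, w⟫)
        exact abs_eq_zero.1 (le_antisymm habs this)
      intro w
      obtain ⟨u, hu, z, hz, hw⟩ := htrans w
      rw [hw, inner_add_right, hBp u hu, hBm z hz, add_zero]
    have hzero : v 0 = 0 := by
      have h := horth (v 0)
      exact inner_self_eq_zero.1 h
    intro k
    rw [hv0 k, hzero, map_zero]

end AdjHelpers

/-- If `C` is hyperbolic on both rays and `B⁺(C) + B⁻(C) = ℝⁿ`, then the adjoint sequence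
`D k = ((C k)*)⁻¹ = ((C k)⁻¹)*` is hyperbolic on both rays and admits no nonzero bounded
full solution. -/
theorem adjoint_hyperbolic_no_bounded_solution {n : ℕ}
    (C D : ℤ → (EuclideanSpace ℝ (Fin n) ≃L[ℝ] EuclideanSpace ℝ (Fin n)))
    (hC : ∃ B : ℝ, ∀ k : ℤ,
      ‖(C k : EuclideanSpace ℝ (Fin n) →L[ℝ] EuclideanSpace ℝ (Fin n))‖ ≤ B ∧
      ‖((C k).symm : EuclideanSpace ℝ (Fin n) →L[ℝ] EuclideanSpace ℝ (Fin n))‖ ≤ B)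
    (hD : ∀ k : ℤ, (D k : EuclideanSpace ℝ (Fin n) →L[ℝ] EuclideanSpace ℝ (Fin n)) =
      ContinuousLinearMap.adjoint
        ((C k).symm : EuclideanSpace ℝ (Fin n) →L[ℝ] EuclideanSpace ℝ (Fin n)))
    (hplus : HypPlus C) (hminus : HypMinus C)
    (htrans : ∀ w : EuclideanSpace ℝ (Fin n),
      ∃ u ∈ BplusSet C, ∃ z ∈ BminusSet C, w = u + z) :
    HypPlus D ∧ HypMinus D ∧
      ∀ v : ℤ → EuclideanSpace ℝ (Fin n),
        (∀ k : ℤ, v (k + 1) = D k (v k)) → (∃ B : ℝ, ∀ k : ℤ, ‖v k‖ ≤ B) →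
        ∀ k : ℤ, v k = 0 :=
  main_thm C D hC hD hplus hminus htrans
end
end

section
/- Let (a_k)_{k≥0} be positive real numbers and let K > 0 and α > 0 be constants such that a_k ≤ K e^{−α(k−m)} a_m for all integers 0 ≤ m ≤ k. Let (g_k)_{k≥1} be a bounded sequence of real numbers. Then every sequence (λ_k)_{k≥0} of real numbers satisfying λ_{k+1} = (a_{k+1}/a_k) λ_k + g_{k+1} for all k ≥ 0 is bounded, for any choice of λ₀. -/
noncomputable section

/-- If `a k ≤ K * exp (-α * (k - m)) * a m` for `0 ≤ m ≤ k` and `g` is bounded, then every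
solution of `λ (k+1) = (a (k+1) / a k) * λ k + g (k+1)` is bounded, for any `λ 0`. -/
theorem bounded_solutions_of_stable_scalar_equation
    (a : ℕ → ℝ) (ha : ∀ k : ℕ, 0 < a k)
    (K α : ℝ) (hK : 0 < K) (hα : 0 < α)
    (hdecay : ∀ m k : ℕ, m ≤ k → a k ≤ K * Real.exp (-α * ((k : ℝ) - (m : ℝ))) * a m)
    (g : ℕ → ℝ) (hg : ∃ B : ℝ, ∀ k : ℕ, |g k| ≤ B)
    (lam : ℕ → ℝ) (hlam : ∀ k : ℕ, lam (k + 1) = (a (k + 1) / a k) * lam k + g (k + 1)) :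
    ∃ B : ℝ, ∀ k : ℕ, |lam k| ≤ B := by
  obtain ⟨B, hB⟩ := hg
  have hB0 : 0 ≤ B := (abs_nonneg _).trans (hB 0)
  set r := Real.exp (-α) with hr
  have hr0 : 0 < r := Real.exp_pos _
  have hr1 : r < 1 := by
    rw [hr, Real.exp_lt_one_iff]; linarith
  -- ratio bound
  have hratio : ∀ m k : ℕ, m ≤ k → a k / a m ≤ K * r ^ (k - m) := by
    intro m k hmk
    rw [div_le_iff₀ (ha m)]
    calc a k ≤ K * Real.exp (-α * ((k : ℝ) - (m : ℝ))) * a m := hdecay m k hmk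
      _ = K * r ^ (k - m) * a m := by
          congr 2
          rw [← Nat.cast_sub hmk, mul_comm, Real.exp_nat_mul]
  -- closed form
  have key : ∀ k, lam k = (a k / a 0) * lam 0 +
      ∑ j ∈ Finset.range k, (a k / a (j + 1)) * g (j + 1) := by
    intro k
    induction k with
    | zero => simp [div_self (ha 0).ne']
    | succ k ih =>
      have hmul : ∀ x y : ℝ, x ≠ 0 →
          (a (k + 1) / a k) * ((a k / x) * y) = (a (k + 1) / x) * y := by
        intro x y hx
        have hk := (ha k).ne'
        field_simp
      rw [hlam k, ih, mul_add, Finset.mul_sum, Finset.sum_range_succ]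
      have hsum : ∑ j ∈ Finset.range k, (a (k + 1) / a k) * ((a k / a (j + 1)) * g (j + 1)) =
          ∑ j ∈ Finset.range k, (a (k + 1) / a (j + 1)) * g (j + 1) :=
        Finset.sum_congr rfl fun j _ => hmul _ _ (ha (j + 1)).ne'
      rw [hsum, hmul _ _ (ha 0).ne', div_self (ha (k + 1)).ne', one_mul]
      ring
  -- geometric sum bound
  have hgeom : ∀ n : ℕ, ∑ i ∈ Finset.range n, r ^ i ≤ (1 - r)⁻¹ := by
    intro n
    have h1r : 0 < 1 - r := by linarith
    have hpos : 0 < r ^ n := pow_pos hr0 n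
    rw [geom_sum_eq hr1.ne n, div_le_iff_of_neg (by linarith : r - 1 < 0)]
    nlinarith [inv_mul_cancel₀ h1r.ne', hpos]
  refine ⟨K * |lam 0| + K * B * (1 - r)⁻¹, fun k => ?_⟩
  rw [key k]
  have h1 : |(a k / a 0) * lam 0| ≤ K * |lam 0| := by
    rw [abs_mul, abs_of_pos (div_pos (ha k) (ha 0))]
    have : a k / a 0 ≤ K * r ^ (k - 0) := hratio 0 k (Nat.zero_le k)
    have hle : a k / a 0 ≤ K := by
      refine this.trans ?_
      have : r ^ (k - 0) ≤ 1 := pow_le_one₀ hr0.le hr1.le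
      nlinarith
    exact mul_le_mul_of_nonneg_right hle (abs_nonneg _)
  have h2 : |∑ j ∈ Finset.range k, (a k / a (j + 1)) * g (j + 1)| ≤ K * B * (1 - r)⁻¹ := by
    calc |∑ j ∈ Finset.range k, (a k / a (j + 1)) * g (j + 1)|
        ≤ ∑ j ∈ Finset.range k, |(a k / a (j + 1)) * g (j + 1)| :=
          Finset.abs_sum_le_sum_abs _ _
      _ ≤ ∑ j ∈ Finset.range k, K * B * r ^ (k - 1 - j) := by
          refine Finset.sum_le_sum fun j hj => ?_
          have hjk : j + 1 ≤ k := Finset.mem_range.mp hj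
          rw [abs_mul, abs_of_pos (div_pos (ha k) (ha (j + 1)))]
          have hgj : |g (j + 1)| ≤ B := hB _
          have hrj : a k / a (j + 1) ≤ K * r ^ (k - (j + 1)) := hratio _ _ hjk
          have hkj : k - (j + 1) = k - 1 - j := by omega
          rw [← hkj]
          calc a k / a (j + 1) * |g (j + 1)|
              ≤ (K * r ^ (k - (j + 1))) * B := by
                apply mul_le_mul hrj hgj (abs_nonneg _)
                positivity
            _ = K * B * r ^ (k - (j + 1)) := by ring
      _ = K * B * ∑ j ∈ Finset.range k, r ^ (k - 1 - j) := by rw [Finset.mul_sum]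
      _ = K * B * ∑ j ∈ Finset.range k, r ^ j := by rw [Finset.sum_range_reflect]
      _ ≤ K * B * (1 - r)⁻¹ := by
          apply mul_le_mul_of_nonneg_left (hgeom k) (by positivity)
  calc |(a k / a 0) * lam 0 + ∑ j ∈ Finset.range k, (a k / a (j + 1)) * g (j + 1)|
      ≤ |(a k / a 0) * lam 0| + |∑ j ∈ Finset.range k, (a k / a (j + 1)) * g (j + 1)| :=
        abs_add_le _ _
    _ ≤ K * |lam 0| + K * B * (1 - r)⁻¹ := add_le_add h1 h2
end
end

section
/- If y ∈ M is chain recurrent, then for every d > 0 there exist T > 0 and a d-pseudotrajectory g : ℝ → M of φ which is T-periodic (g(t + T) = g(t) for all t ∈ ℝ) and satisfies g(0) = y. -/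
noncomputable section

/-- Every chain recurrent point `y` lies, for every `d > 0`, on a periodic
`d`-pseudotrajectory of the flow `φ` passing through `y` at time `0`. -/
theorem chain_recurrent_point_on_periodic_pseudotrajectory
    {M : Type*} [MetricSpace M] [CompactSpace M]
    (φ : ℝ → M → M)
    (hcont : Continuous fun p : ℝ × M => φ p.1 p.2)
    (hzero : ∀ x : M, φ 0 x = x)
    (hadd : ∀ (s t : ℝ) (x : M), φ (s + t) x = φ s (φ t x))
    (ν : ℝ) (hν : 1 ≤ ν)
    (hlip : ∀ t : ℝ, 0 ≤ t → t ≤ 1 → ∀ x y : M, dist (φ t x) (φ t y) ≤ ν * dist x y)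
    (y : M)
    (hCR : ∀ ε θ : ℝ, 0 < ε → 0 < θ →
      ∃ (N : ℕ) (ys : ℕ → M) (Ts : ℕ → ℝ),
        ys 0 = y ∧ (∀ i : ℕ, i ≤ N → θ < Ts i) ∧
        (∀ i : ℕ, i < N → dist (φ (Ts i) (ys i)) (ys (i + 1)) < ε) ∧
        dist (φ (Ts N) (ys N)) y < ε) :
    ∀ d : ℝ, 0 < d →
      ∃ (T : ℝ) (g : ℝ → M), 0 < T ∧
        (∀ τ t : ℝ, 0 ≤ t → t ≤ 1 → dist (g (τ + t)) (φ t (g τ)) ≤ d) ∧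
        (∀ t : ℝ, g (t + T) = g t) ∧
        g 0 = y := by
  classical
  intro d hd
  have hν0 : (0:ℝ) < ν := lt_of_lt_of_le one_pos hν
  have hε : 0 < d / ν := div_pos hd hν0
  obtain ⟨N, ys, Ts, hys0, hTs, hjump, hlast⟩ := hCR (d / ν) 1 hε one_pos
  set S : ℕ → ℝ := fun n => ∑ i ∈ Finset.range n, Ts i with hSdef
  have hS0 : S 0 = 0 := by simp [hSdef]
  have hSsucc : ∀ n, S (n + 1) = S n + Ts n := fun n => Finset.sum_range_succ _ n
  have hstep : ∀ i, i ≤ N → S i + 1 < S (i + 1) := by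
    intro i hi
    have := hTs i hi
    rw [hSsucc]; linarith
  have hSmono : ∀ j, j ≤ N + 1 → ∀ i, i ≤ j → S i ≤ S j := by
    intro j hj
    induction j with
    | zero => intro i hi; interval_cases i; exact le_refl _
    | succ n ih =>
      intro i hi
      rcases eq_or_lt_of_le hi with h | h
      · subst h; exact le_refl _
      · have h1 := ih (by omega) i (by omega)
        have h2 := hstep n (by omega)
        linarith
  set T : ℝ := S (N + 1) with hTdef
  have hT1 : 1 < T := by
    have h1 := hstep 0 (Nat.zero_le N)
    have h2 := hSmono (N + 1) le_rfl 1 (by omega)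
    rw [hS0] at h1
    linarith
  have hT0 : (0:ℝ) < T := by linarith
  set R : ℝ → ℝ := fun t => t - T * (⌊t / T⌋ : ℤ) with hRdef
  have hRval : ∀ (s : ℝ), 0 ≤ s → s < T → ∀ m : ℤ, R (s + T * m) = s := by
    intro s hs0 hsT m
    have hfl : ⌊s / T⌋ = 0 :=
      Int.floor_eq_zero_iff.mpr ⟨div_nonneg hs0 hT0.le, (div_lt_one hT0).mpr hsT⟩
    have h1 : (s + T * m) / T = s / T + m := by field_simp
    simp only [hRdef, h1, Int.floor_add_intCast, hfl]
    push_cast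
    ring
  have hRself : ∀ t : ℝ, t = R t + T * (⌊t / T⌋ : ℤ) := by
    intro t; simp only [hRdef]; ring
  have hRmem : ∀ t : ℝ, 0 ≤ R t ∧ R t < T := by
    intro t
    have h1 : (⌊t / T⌋ : ℝ) ≤ t / T := Int.floor_le _
    have h2 : t / T < ⌊t / T⌋ + 1 := Int.lt_floor_add_one _
    have h3 : T * (⌊t / T⌋ : ℝ) ≤ t := by
      have := mul_le_mul_of_nonneg_left h1 hT0.le
      rwa [mul_div_cancel₀ t hT0.ne'] at this
    have h4 : t < T * ((⌊t / T⌋ : ℝ) + 1) := by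
      have := mul_lt_mul_of_pos_left h2 hT0
      rwa [mul_div_cancel₀ t hT0.ne'] at this
    constructor
    · simp only [hRdef]; linarith
    · simp only [hRdef]; nlinarith
  set idx : ℝ → ℕ := fun u => Nat.findGreatest (fun i => S i ≤ u) N with hidxdef
  have hidxle : ∀ u : ℝ, idx u ≤ N := fun u => Nat.findGreatest_le N
  have hidxS : ∀ u : ℝ, 0 ≤ u → S (idx u) ≤ u := by
    intro u hu
    exact Nat.findGreatest_spec (P := fun i => S i ≤ u) (Nat.zero_le N)
      (show S 0 ≤ u by rw [hS0]; exact hu)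
  have hidxS1 : ∀ u : ℝ, u < T → u < S (idx u + 1) := by
    intro u hu
    rcases Nat.lt_or_ge (idx u) N with h | h
    · by_contra hc
      push_neg at hc
      exact Nat.findGreatest_is_greatest (P := fun k => S k ≤ u) (n := N)
        (k := idx u + 1) (Nat.lt_succ_self _) (by omega) hc
    · have he : idx u = N := le_antisymm (hidxle u) h
      rw [he]; exact hu
  have hidx0 : ∀ u : ℝ, u < 1 → idx u = 0 := by
    intro u hu
    refine Nat.findGreatest_eq_zero_iff.mpr ?_
    intro k hk hkN hSk
    have h3 : S 1 ≤ S k := hSmono k (by omega) 1 hk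
    have h4 := hstep 0 (Nat.zero_le N)
    rw [hS0] at h4
    linarith
  set g : ℝ → M := fun t => φ (R t - S (idx (R t))) (ys (idx (R t))) with hgdef
  have hR0 : R 0 = 0 := by
    have := hRval 0 le_rfl hT0 0
    simpa using this
  refine ⟨T, g, hT0, ?_, ?_, ?_⟩
  · -- pseudotrajectory property
    intro τ t ht0 ht1
    set u : ℝ := R τ with hudef
    have hu0 : 0 ≤ u := (hRmem τ).1
    have huT : u < T := (hRmem τ).2
    set i : ℕ := idx u with hidef
    have hiN : i ≤ N := hidxle u
    have hSiu : S i ≤ u := hidxS u hu0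
    have huSi1 : u < S (i + 1) := hidxS1 u huT
    have hgτ : g τ = φ (u - S i) (ys i) := rfl
    have hφτ : φ t (g τ) = φ (t + (u - S i)) (ys i) := by
      rw [hgτ, hadd]
    rcases lt_or_ge (u + t) T with hcase | hcase
    · -- no wrap-around
      have hrv : R (τ + t) = u + t := by
        have heq : τ + t = (u + t) + T * (⌊τ / T⌋ : ℤ) := by
          have := hRself τ; linarith
        rw [heq]
        exact hRval (u + t) (by linarith) hcase _
      set j : ℕ := idx (u + t) with hjdef
      have hji : i ≤ j :=
        Nat.le_findGreatest (P := fun k => S k ≤ u + t) hiN (by linarith)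
      have hjN : j ≤ N := hidxle (u + t)
      have hSj : S j ≤ u + t := hidxS (u + t) (by linarith)
      have hj1 : j ≤ i + 1 := by
        by_contra hc
        push_neg at hc
        have h1 : S (i + 2) ≤ S j := hSmono j (by omega) (i + 2) (by omega)
        have h2 := hstep (i + 1) (by omega)
        linarith
      have hgv : g (τ + t) = φ ((u + t) - S j) (ys j) := by
        simp only [hgdef, hrv, hjdef]
      rcases eq_or_lt_of_le hji with hji' | hji'
      · -- j = i : same segment, exact flow
        rw [hgv, ← hji', hφτ]
        have : (u + t) - S i = t + (u - S i) := by ring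
        rw [this, dist_self]
        exact hd.le
      · -- j = i + 1 : one jump crossed
        have hj' : j = i + 1 := by omega
        have hiN' : i < N := by omega
        rw [hgv, hj', hφτ]
        have hSi1 : S (i + 1) ≤ u + t := by rw [← hj']; exact hSj
        have hsplit : t + (u - S i) = ((u + t) - S (i + 1)) + Ts i := by
          have := hSsucc i; linarith
        rw [hsplit, hadd]
        have hs0 : 0 ≤ (u + t) - S (i + 1) := by linarith
        have hs1 : (u + t) - S (i + 1) ≤ 1 := by linarith
        calc dist (φ ((u + t) - S (i + 1)) (ys (i + 1)))
              (φ ((u + t) - S (i + 1)) (φ (Ts i) (ys i)))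
            ≤ ν * dist (ys (i + 1)) (φ (Ts i) (ys i)) := hlip _ hs0 hs1 _ _
          _ ≤ ν * (d / ν) := by
              have := hjump i hiN'
              rw [dist_comm]
              nlinarith
          _ = d := by field_simp
    · -- wrap-around: must be on the last segment
      have hvdef : (0:ℝ) ≤ u + t - T := by linarith
      have hv1 : u + t - T < 1 := by linarith
      have hrv : R (τ + t) = u + t - T := by
        have heq : τ + t = (u + t - T) + T * ((⌊τ / T⌋ + 1 : ℤ) : ℝ) := by
          have := hRself τ; push_cast; linarith
        rw [heq]
        exact hRval (u + t - T) hvdef (by linarith) _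
      have hSN : S N ≤ u := by
        have h1 : S N + Ts N = T := (hSsucc N).symm
        have h2 := hTs N le_rfl
        linarith
      have hiNe : i = N := le_antisymm hiN (Nat.le_findGreatest le_rfl hSN)
      have hidxv : idx (u + t - T) = 0 := hidx0 _ hv1
      have hgv : g (τ + t) = φ (u + t - T) y := by
        simp only [hgdef, hrv, hidxv, hS0, hys0, sub_zero]
      rw [hgv, hφτ, hiNe]
      have hsplit : t + (u - S N) = (u + t - T) + Ts N := by
        have := hSsucc N; linarith
      rw [hsplit, hadd]
      calc dist (φ (u + t - T) y) (φ (u + t - T) (φ (Ts N) (ys N)))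
          ≤ ν * dist y (φ (Ts N) (ys N)) := hlip _ hvdef hv1.le _ _
        _ ≤ ν * (d / ν) := by
            rw [dist_comm]
            nlinarith
        _ = d := by field_simp
  · -- periodicity
    intro t
    have hRT : R (t + T) = R t := by
      have h1 : t + T = R t + T * ((⌊t / T⌋ + 1 : ℤ) : ℝ) := by
        have := hRself t; push_cast; linarith
      rw [h1]
      exact hRval (R t) (hRmem t).1 (hRmem t).2 _
    simp only [hgdef, hRT]
  · -- g 0 = y
    show φ (R 0 - S (idx (R 0))) (ys (idx (R 0))) = y
    rw [hR0, hidx0 0 one_pos, hS0, sub_zero, hzero, hys0]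
end
end

section
/- Suppose the flow φ is expansive with constants a, δ > 0. Let g : ℝ → M be μ-periodic (g(t + μ) = g(t) for all t ∈ ℝ) with μ > δ, let p ∈ M, and let α : ℝ → ℝ be an increasing homeomorphism such that dist(g(t), φ(α(t), p)) < a/2 for all t ∈ ℝ. Then there exists τ ∈ (−δ, δ) such that φ(μ, p) = φ(τ, p); in particular, φ(μ − τ, p) = p with μ − τ > 0, so the trajectory of p is closed or p is a rest point. -/
noncomputable section

/-- If the flow `φ` is expansive with constants `a, δ` and a `μ`-periodic function `g`
(`μ > δ`) is `a/2`-shadowed by the reparametrized trajectory of `p`, then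
`φ μ p = φ τ p` for some `τ ∈ (-δ, δ)`; in particular `φ (μ - τ) p = p` with
`μ - τ > 0`, so the trajectory of `p` is closed or `p` is a rest point. -/
theorem shadowing_periodic_pseudotrajectory_gives_closed_orbit
    {M : Type*} [MetricSpace M] [CompactSpace M]
    (φ : ℝ → M → M)
    (hcont : Continuous fun p : ℝ × M => φ p.1 p.2)
    (hzero : ∀ x : M, φ 0 x = x)
    (hadd : ∀ (s t : ℝ) (x : M), φ (s + t) x = φ s (φ t x))
    (a δ : ℝ) (ha : 0 < a) (hδ : 0 < δ)
    (hexp : ∀ (x y : M) (α : ℝ → ℝ), StrictMono α → Function.Surjective α →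
      (∀ t : ℝ, dist (φ t x) (φ (α t) y) < a) → ∃ τ : ℝ, |τ| < δ ∧ y = φ τ x)
    (g : ℝ → M) (μ : ℝ) (hμ : δ < μ) (hper : ∀ t : ℝ, g (t + μ) = g t)
    (p : M) (α : ℝ → ℝ) (hα₁ : StrictMono α) (hα₂ : Function.Surjective α)
    (hsh : ∀ t : ℝ, dist (g t) (φ (α t) p) < a / 2) :
    ∃ τ : ℝ, -δ < τ ∧ τ < δ ∧ φ μ p = φ τ p ∧ 0 < μ - τ ∧ φ (μ - τ) p = p := by
  -- inverse of α
  have hbij : Function.Bijective α := ⟨hα₁.injective, hα₂⟩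
  set e := Equiv.ofBijective α hbij with he
  have hαe : ∀ t, α (e.symm t) = t := fun t => e.apply_symm_apply t
  have hesymm : StrictMono e.symm := by
    intro s t hst
    by_contra h
    push_neg at h
    have := hα₁.monotone h
    rw [hαe, hαe] at this
    exact absurd hst (not_lt.mpr this)
  -- the reparametrization β
  set β : ℝ → ℝ := fun t => α (e.symm (t + μ) - μ) with hβ
  have hβ₁ : StrictMono β := by
    intro s t hst
    exact hα₁ (by have := hesymm (show s + μ < t + μ by linarith); linarith)
  have hβ₂ : Function.Surjective β := by
    intro y
    obtain ⟨s, rfl⟩ := hα₂ y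
    refine ⟨α (s + μ) - μ, ?_⟩
    simp only [hβ]
    rw [sub_add_cancel, Equiv.ofBijective_symm_apply_apply, add_sub_cancel_right]
  -- key distance estimate
  have hdist : ∀ t : ℝ, dist (φ t (φ μ p)) (φ (β t) p) < a := by
    intro t
    set u := e.symm (t + μ) - μ with hu
    have h1 : t + μ = α (u + μ) := by rw [hu, sub_add_cancel, hαe]
    have h2 : φ t (φ μ p) = φ (α (u + μ)) p := by rw [← hadd, ← h1]
    have h3 : dist (g u) (φ (α (u + μ)) p) < a / 2 := by
      rw [← hper u]; exact hsh (u + μ)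
    calc dist (φ t (φ μ p)) (φ (β t) p)
        ≤ dist (φ (α (u + μ)) p) (g u) + dist (g u) (φ (α u) p) := by
          rw [h2]; exact dist_triangle _ _ _
      _ < a / 2 + a / 2 := by
          refine add_lt_add ?_ (hsh u)
          rw [dist_comm]; exact h3
      _ = a := by ring
  obtain ⟨τ₀, hτ₀, hp⟩ := hexp (φ μ p) p β hβ₁ hβ₂ hdist
  refine ⟨-τ₀, ?_, ?_, ?_, ?_, ?_⟩
  · rw [abs_lt] at hτ₀; linarith
  · rw [abs_lt] at hτ₀; linarith
  · rw [← hadd] at hp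
    have : φ (-τ₀) p = φ (-τ₀) (φ (τ₀ + μ) p) := by rw [← hp]
    rw [← hadd] at this
    rw [this]; ring_nf
  · rw [abs_lt] at hτ₀; linarith
  · rw [← hadd] at hp
    rw [show μ - -τ₀ = τ₀ + μ by ring, ← hp]
end
end
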